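/- arXiv:1812.08838 — 2 statements merged into one kernel-verified Lean document; each statement's English description precedes it below -/
import Mathlib

section
/- Let ρ : ℤ → ℝ with ρ(-k) = ρ(k), let n ≥ 1, set ρ_n(k) = |ρ(k)|·1_{|k|<n} and 1_n(k) = 1_{|k|<n}, and let b ∈ [1,2]. Then Σ_{i,j,k,ℓ=0}^{n-1} ρ(j-k)² |ρ(i-j)| |ρ(k-ℓ)| ≤ n^{(3b-2)/b} · ‖ρ_n²‖_{ℓ¹(ℤ)} · ‖ρ_n‖_{ℓ^b(ℤ)}², where ρ_n² denotes the pointwise square of ρ_n. -/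
/-!
Summing out the outer indices, the sum is `∑_{j,k<n} ρ(j-k)² R_j R'_k` with
`R_j = ∑_{i<n} |ρ(i-j)|` and `R'_k = ∑_{l<n} |ρ(k-l)|`. Each of these is a sum of `|ρ|` over `n`
distinct points of the window `(-n, n)`, so Hölder against the constant `1` bounds it by
`n^{(b-1)/b} ‖ρ_n‖_b`; likewise `∑_{k<n} ρ(j-k)² ≤ ‖ρ_n²‖_1` for every `j`.
-/

open Finset

theorem Real.sum_le_card_rpow_mul_sum_rpow_rpow_of_nonneg {ι : Type*} {s : Finset ι} {f : ι → ℝ}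
    {p : ℝ} (hp : 1 ≤ p) (hf : ∀ i ∈ s, 0 ≤ f i) :
    ∑ i ∈ s, f i ≤ (#s : ℝ) ^ ((p - 1) / p) * (∑ i ∈ s, f i ^ p) ^ (1 / p) := by
  have hp0 : p ≠ 0 := by positivity
  have hsum : 0 ≤ ∑ i ∈ s, f i := sum_nonneg hf
  calc ∑ i ∈ s, f i = ((∑ i ∈ s, f i) ^ p) ^ (1 / p) := by
        rw [one_div, Real.rpow_rpow_inv hsum hp0]
    _ ≤ ((#s : ℝ) ^ (p - 1) * ∑ i ∈ s, f i ^ p) ^ (1 / p) := by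
        gcongr
        exact Real.rpow_sum_le_const_mul_sum_rpow_of_nonneg s hp hf
    _ = (#s : ℝ) ^ ((p - 1) / p) * (∑ i ∈ s, f i ^ p) ^ (1 / p) := by
        rw [Real.mul_rpow (by positivity) (sum_nonneg fun i hi => Real.rpow_nonneg (hf i hi) p),
          ← Real.rpow_mul (by positivity), mul_one_div]

theorem sum_range_comp_le_sum_Ioo {f : ℤ → ℝ} {n : ℕ} (hf : ∀ m ∈ Ioo (-(n : ℤ)) n, 0 ≤ f m)
    {e : ℕ → ℤ} (he : Set.InjOn e (range n)) (he_mem : ∀ i < n, e i ∈ Ioo (-(n : ℤ)) n) :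
    ∑ i ∈ range n, f (e i) ≤ ∑ m ∈ Ioo (-(n : ℤ)) n, f m := by
  rw [← sum_image (by simpa using he)]
  refine sum_le_sum_of_subset_of_nonneg ?_ fun m hm _ => hf m hm
  simpa [image_subset_iff] using he_mem

theorem sum_range_abs_comp_le_rpow_mul_sum_Ioo {ρ : ℤ → ℝ} {n : ℕ} {b : ℝ} (hb : 1 ≤ b)
    {e : ℕ → ℤ} (he : Set.InjOn e (range n)) (he_mem : ∀ i < n, e i ∈ Ioo (-(n : ℤ)) n) :
    ∑ i ∈ range n, |ρ (e i)|
      ≤ (n : ℝ) ^ ((b - 1) / b) * (∑ k ∈ Ioo (-(n : ℤ)) n, |ρ k| ^ b) ^ (1 / b) := by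
  calc ∑ i ∈ range n, |ρ (e i)|
      ≤ (n : ℝ) ^ ((b - 1) / b) * (∑ i ∈ range n, |ρ (e i)| ^ b) ^ (1 / b) := by
        simpa using Real.sum_le_card_rpow_mul_sum_rpow_rpow_of_nonneg (s := range n) hb
          (fun i _ => abs_nonneg (ρ (e i)))
    _ ≤ _ := by
        gcongr
        exact sum_range_comp_le_sum_Ioo (f := fun m => |ρ m| ^ b) (fun m _ => by positivity) he
          he_mem

theorem mul_rpow_mul_rpow_sq {x y b : ℝ} (hx : 0 ≤ x) (hy : 0 ≤ y) (hb : 1 ≤ b) :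
    x * (x ^ ((b - 1) / b) * y ^ (1 / b)) ^ 2 = x ^ ((3 * b - 2) / b) * y ^ ((2 : ℝ) / b) := by
  have hexp : (3 * b - 2) / b = 1 + (b - 1) / b * (2 : ℕ) := by
    field_simp
    ring
  have hexp_pos : 0 < (3 * b - 2) / b := div_pos (by linarith) (by linarith)
  rw [hexp, Real.rpow_add' hx (hexp ▸ hexp_pos.ne'), Real.rpow_one, Real.rpow_mul_natCast hx,
    show (2 : ℝ) / b = 1 / b * (2 : ℕ) by ring, Real.rpow_mul_natCast hy]
  ring

theorem fourfold_sum_sparse_bound_general (ρ : ℤ → ℝ) (n : ℕ) (b : ℝ) (hb : b ∈ Set.Icc (1 : ℝ) 2) :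
    ∑ i ∈ Finset.range n, ∑ j ∈ Finset.range n, ∑ k ∈ Finset.range n, ∑ l ∈ Finset.range n,
        (ρ ((j : ℤ) - (k : ℤ))) ^ 2 * |ρ ((i : ℤ) - (j : ℤ))| * |ρ ((k : ℤ) - (l : ℤ))|
      ≤ (n : ℝ) ^ ((3 * b - 2) / b)
          * (∑ k ∈ Finset.Ioo (-(n : ℤ)) (n : ℤ), (ρ k) ^ 2)
          * (∑ k ∈ Finset.Ioo (-(n : ℤ)) (n : ℤ), |ρ k| ^ b) ^ ((2 : ℝ) / b) := by
  set B := ∑ k ∈ Ioo (-(n : ℤ)) n, |ρ k| ^ b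
  have hB : 0 ≤ B := sum_nonneg fun k _ => by positivity
  set C := (n : ℝ) ^ ((b - 1) / b) * B ^ (1 / b)
  have hrow : ∀ j < n, ∑ i ∈ range n, |ρ (i - j)| ≤ C := fun j hj =>
    sum_range_abs_comp_le_rpow_mul_sum_Ioo hb.1 (fun _ _ _ _ h => by simpa using h)
      (fun i hi => by simp only [mem_Ioo]; omega)
  have hcol : ∀ k < n, ∑ l ∈ range n, |ρ (k - l)| ≤ C := fun k hk =>
    sum_range_abs_comp_le_rpow_mul_sum_Ioo hb.1 (fun _ _ _ _ h => by simpa using h)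
      (fun i hi => by simp only [mem_Ioo]; omega)
  have hsq : ∀ j < n, ∑ k ∈ range n, ρ (j - k) ^ 2 ≤ ∑ k ∈ Ioo (-(n : ℤ)) n, ρ k ^ 2 :=
    fun j hj => sum_range_comp_le_sum_Ioo (fun m _ => sq_nonneg _)
      (fun _ _ _ _ h => by simpa using h) (fun i hi => by simp only [mem_Ioo]; omega)
  calc _ = ∑ j ∈ range n, ∑ k ∈ range n, ρ (j - k) ^ 2 * (∑ i ∈ range n, |ρ (i - j)|)
          * ∑ l ∈ range n, |ρ (k - l)| := by
        simp only [mul_sum, sum_mul]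
        rw [sum_comm]
        refine sum_congr rfl fun j _ => ?_
        rw [sum_comm]
        exact sum_congr rfl fun k _ => sum_comm
    _ ≤ ∑ j ∈ range n, ∑ k ∈ range n, ρ (j - k) ^ 2 * C * C := by
        gcongr with j hj k hk
        · exact hrow j (mem_range.1 hj)
        · exact hcol k (mem_range.1 hk)
    _ = ∑ j ∈ range n, (∑ k ∈ range n, ρ (j - k) ^ 2) * C ^ 2 := by
        simp only [sum_mul, sq C, mul_assoc]
    _ ≤ ∑ j ∈ range n, (∑ k ∈ Ioo (-(n : ℤ)) n, ρ k ^ 2) * C ^ 2 := by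
        gcongr with j hj
        exact hsq j (mem_range.1 hj)
    _ = _ := by
        rw [sum_const, card_range, nsmul_eq_mul]
        linear_combination (∑ k ∈ Ioo (-(n : ℤ)) n, ρ k ^ 2) *
          mul_rpow_mul_rpow_sq (Nat.cast_nonneg n) hB hb.1

/-- The convolution estimate behind Theorem 1.2(ii): for `ρ` symmetric, `n ≥ 1`, `b ∈ [1,2]`,
`Σ_{i,j,k,ℓ=0}^{n-1} ρ(j-k)² |ρ(i-j)||ρ(k-ℓ)| ≤ n^{(3b-2)/b} ‖ρ_n²‖_{ℓ¹} ‖ρ_n‖_{ℓ^b}²`. -/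
theorem fourfold_sum_sparse_bound (ρ : ℤ → ℝ) (hsym : ∀ k, ρ (-k) = ρ k)
    (n : ℕ) (hn : 1 ≤ n) (b : ℝ) (hb : b ∈ Set.Icc (1 : ℝ) 2) :
    ∑ i ∈ Finset.range n, ∑ j ∈ Finset.range n, ∑ k ∈ Finset.range n, ∑ l ∈ Finset.range n,
        (ρ ((j : ℤ) - (k : ℤ))) ^ 2 * |ρ ((i : ℤ) - (j : ℤ))| * |ρ ((k : ℤ) - (l : ℤ))|
      ≤ (n : ℝ) ^ ((3 * b - 2) / b)
          * (∑ k ∈ Finset.Ioo (-(n : ℤ)) (n : ℤ), (ρ k) ^ 2)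
          * (∑ k ∈ Finset.Ioo (-(n : ℤ)) (n : ℤ), |ρ k| ^ b) ^ ((2 : ℝ) / b) :=
  fourfold_sum_sparse_bound_general ρ n b hb
end

section
/- Let F be a centered square-integrable functional of an isonormal Gaussian process such that F = δ(u) for some u in the domain of the divergence δ, with E[⟨DF, u⟩_H] = 1 (where F ∈ 𝔻^{1,2}). Then d_TV(F, N(0,1)) ≤ 2·Var(⟨DF, u⟩_H)^{1/2}. -/
/-!
Stein's method. For a continuous test function `h` with values in `[0, 1]` and `m = E[h(N)]`,
the Stein equation `g' - x g = h - m` has the solution `g = (∫_{-∞}^x (h - m) φ) / φ`, where `φ`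
is the standard Gaussian density. The tail bound `x ∫_x^∞ φ ≤ φ x` (from `φ' = -x φ`) gives
`|x g x| ≤ 1`, hence `|g'| ≤ 2`. Integration by parts turns `E[h(F)] - m = E[g'(F) - F g(F)]`
into `E[g'(F) (1 - G)]`, which is at most `2 E|G - 1| ≤ 2 √Var(G)`. A measurable set is squeezed
between a closed and an open set whose difference is small for both laws, and Urysohn's lemma
gives a continuous test function between their indicators.
-/

open MeasureTheory ProbabilityTheory Real Set Filter Topology

lemma hasDerivAt_integral_Iic {E : Type*} [NormedAddCommGroup E] [NormedSpace ℝ E]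
    [CompleteSpace E] {f : ℝ → E} {x : ℝ} (hf : Integrable f) (hfx : ContinuousAt f x) :
    HasDerivAt (fun u => ∫ t in Iic u, f t) (f x) x := by
  have hsplit : (fun u => ∫ t in Iic u, f t)
      = fun u => (∫ t in Iic 0, f t) + ∫ t in (0 : ℝ)..u, f t := by
    ext u
    rw [← intervalIntegral.integral_Iic_sub_Iic hf.integrableOn hf.integrableOn]
    abel
  rw [hsplit]
  exact (intervalIntegral.integral_hasDerivAt_right hf.intervalIntegrable
    hf.aestronglyMeasurable.stronglyMeasurableAtFilter hfx).const_add _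

lemma Continuous.exists_bound_of_abs_mul_le {f : ℝ → ℝ} {M : ℝ} (hf : Continuous f)
    (h : ∀ x, |x * f x| ≤ M) : ∃ C, ∀ x, |f x| ≤ C := by
  obtain ⟨C, hC⟩ := isCompact_Icc.exists_bound_of_continuousOn (s := Icc (-1 : ℝ) 1) hf.continuousOn
  refine ⟨max C M, fun x => ?_⟩
  rcases le_or_gt |x| 1 with hx | hx
  · exact (hC x (abs_le.1 hx)).trans (le_max_left _ _)
  · calc |f x| ≤ |x| * |f x| := le_mul_of_one_le_left (abs_nonneg _) hx.le
      _ = |x * f x| := (abs_mul _ _).symm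
      _ ≤ max C M := (h x).trans (le_max_right _ _)

lemma abs_sub_integral_le_one {X : Type*} [MeasurableSpace X] {ν : Measure X}
    [IsProbabilityMeasure ν] {f : X → ℝ} (hf : ∀ x, f x ∈ Icc 0 1) (x : X) :
    |f x - ∫ y, f y ∂ν| ≤ 1 := by
  have hle : ‖∫ y, f y ∂ν‖ ≤ 1 * ν.real univ :=
    norm_integral_le_of_norm_le_const (ae_of_all _ fun y => by
      rw [Real.norm_of_nonneg (hf y).1]; exact (hf y).2)
  have hnonneg : 0 ≤ ∫ y, f y ∂ν := integral_nonneg fun y => (hf y).1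
  rw [probReal_univ, mul_one, Real.norm_of_nonneg hnonneg] at hle
  rw [abs_le]
  constructor <;> linarith [(hf x).1, (hf x).2]

lemma integral_abs_sub_integral_le_sqrt_variance {Ω : Type*} [MeasurableSpace Ω] {μ : Measure Ω}
    [IsProbabilityMeasure μ] {X : Ω → ℝ} (hX : MemLp X 2 μ) :
    ∫ ω, |X ω - μ[X]| ∂μ ≤ √(Var[X; μ]) := by
  have hY : MemLp (fun ω => |X ω - μ[X]|) 2 μ := (hX.sub (memLp_const _)).abs
  have hvar := variance_nonneg (fun ω => |X ω - μ[X]|) μ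
  rw [variance_eq_sub hY] at hvar
  simp only [Pi.pow_apply, sq_abs, ← variance_eq_integral hX.aemeasurable] at hvar
  exact Real.le_sqrt_of_sq_le (by linarith)

lemma abs_measureReal_sub_integral_le {X : Type*} [MeasurableSpace X] (ν : Measure X)
    [IsFiniteMeasure ν] {A K U : Set X} (hA : MeasurableSet A) (hK : MeasurableSet K)
    (hU : MeasurableSet U) (hKA : K ⊆ A) (hAU : A ⊆ U) {f : X → ℝ} (hf : Measurable f)
    (hf01 : ∀ x, f x ∈ Icc 0 1) (hfK : EqOn f 1 K) (hfU : EqOn f 0 Uᶜ) :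
    |ν.real A - ∫ x, f x ∂ν| ≤ ν.real (U \ K) := by
  have hdiff (x : X) : ‖A.indicator 1 x - f x‖ ≤ (U \ K).indicator 1 x := by
    have hnonneg : (0 : ℝ) ≤ (U \ K).indicator 1 x := indicator_nonneg (fun _ _ => zero_le_one) x
    rw [Real.norm_eq_abs]
    by_cases hxK : x ∈ K
    · simpa [hfK hxK, hKA hxK] using hnonneg
    by_cases hxU : x ∈ U
    · rw [indicator_of_mem (mem_sdiff_of_mem hxU hxK), Pi.one_apply, abs_le]
      have := (hf01 x).1; have := (hf01 x).2
      by_cases hxA : x ∈ A <;> simp only [hxA, indicator_of_mem, indicator_of_notMem,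
        not_false_eq_true, Pi.one_apply] <;> constructor <;> linarith
    · have hxA : x ∉ A := fun hxA => hxU (hAU hxA)
      simpa [hfU hxU, hxA] using hnonneg
  have hAi : Integrable (A.indicator (1 : X → ℝ)) ν := (integrable_const 1).indicator hA
  have hfi : Integrable f ν := Integrable.of_bound hf.aestronglyMeasurable 1
    (ae_of_all _ fun x => by rw [Real.norm_of_nonneg (hf01 x).1]; exact (hf01 x).2)
  rw [← integral_indicator_one hA, ← integral_indicator_one (hU.diff hK), ← integral_sub hAi hfi]
  exact norm_integral_le_of_norm_le ((integrable_const 1).indicator (hU.diff hK))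
    (ae_of_all _ hdiff)

section TotalVariation

variable {X : Type*} [TopologicalSpace X] [MeasurableSpace X]

lemma MeasurableSet.exists_isClosed_isOpen_measure_sdiff_lt [OpensMeasurableSpace X]
    {μ : Measure X} [μ.WeaklyRegular] {A : Set X} (hA : MeasurableSet A) (hμA : μ A ≠ ⊤)
    {ε : ENNReal} (hε : ε ≠ 0) :
    ∃ K U, IsClosed K ∧ IsOpen U ∧ K ⊆ A ∧ A ⊆ U ∧ μ (U \ K) < ε := by
  have hε₂ : ε / 2 ≠ 0 := (ENNReal.half_pos hε).ne'
  obtain ⟨K, hKA, hK, hAK⟩ := hA.exists_isClosed_sdiff_lt hμA hε₂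
  obtain ⟨U, hAU, hU, -, hUA⟩ := hA.exists_isOpen_sdiff_lt hμA hε₂
  refine ⟨K, U, hK, hU, hKA, hAU, ?_⟩
  calc μ (U \ K) = μ (U \ A ∪ A \ K) := by rw [sdiff_union_sdiff_cancel hAU hKA]
    _ ≤ μ (U \ A) + μ (A \ K) := measure_union_le _ _
    _ < ε / 2 + ε / 2 := ENNReal.add_lt_add hUA hAK
    _ = ε := ENNReal.add_halves ε

theorem abs_measureReal_sub_le_of_forall_continuous [TopologicalSpace.PseudoMetrizableSpace X]
    [BorelSpace X] {P Q : Measure X} [IsFiniteMeasure P] [IsFiniteMeasure Q] {c : ℝ}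
    (h : ∀ f : X → ℝ, Continuous f → (∀ x, f x ∈ Icc 0 1) → |∫ x, f x ∂P - ∫ x, f x ∂Q| ≤ c)
    {A : Set X} (hA : MeasurableSet A) : |P.real A - Q.real A| ≤ c := by
  refine le_of_forall_pos_le_add fun ε hε => ?_
  obtain ⟨K, U, hK, hU, hKA, hAU, hKU⟩ := hA.exists_isClosed_isOpen_measure_sdiff_lt
    (μ := P + Q) (measure_ne_top _ _) (ENNReal.ofReal_pos.2 hε).ne'
  obtain ⟨f, hfU, hfK, hf01⟩ := exists_continuous_zero_one_of_isClosed hU.isClosed_compl hK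
    (disjoint_compl_left_iff_subset.2 (hKA.trans hAU))
  have hP := abs_measureReal_sub_integral_le P hA hK.measurableSet hU.measurableSet hKA hAU
    f.continuous.measurable hf01 hfK hfU
  have hQ := abs_measureReal_sub_integral_le Q hA hK.measurableSet hU.measurableSet hKA hAU
    f.continuous.measurable hf01 hfK hfU
  have hPQ : P.real (U \ K) + Q.real (U \ K) ≤ ε := by
    rw [← measureReal_add_apply]
    exact ENNReal.toReal_le_of_le_ofReal hε.le hKU.le
  have hf := h f f.continuous hf01
  rw [abs_sub_comm] at hQ
  linarith [abs_sub_le (P.real A) (∫ x, f x ∂P) (Q.real A),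
    abs_sub_le (∫ x, f x ∂P) (∫ x, f x ∂Q) (Q.real A)]

end TotalVariation

lemma hasDerivAt_gaussianPDFReal (μ : ℝ) (v : NNReal) (x : ℝ) :
    HasDerivAt (gaussianPDFReal μ v) (-(x - μ) / v * gaussianPDFReal μ v x) x := by
  have h := ((((hasDerivAt_id x).sub_const μ).pow 2).neg.div_const (2 * (v : ℝ))).exp.const_mul
    (√(2 * π * v))⁻¹
  refine h.congr_deriv ?_
  simp only [gaussianPDFReal, id, Pi.neg_apply, Pi.pow_apply]
  field_simp
  ring

lemma continuous_gaussianPDFReal (μ : ℝ) (v : NNReal) : Continuous (gaussianPDFReal μ v) :=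
  continuous_iff_continuousAt.2 fun x => (hasDerivAt_gaussianPDFReal μ v x).continuousAt

lemma gaussianPDFReal_zero_neg (v : NNReal) (x : ℝ) :
    gaussianPDFReal 0 v (-x) = gaussianPDFReal 0 v x := by
  simp [gaussianPDFReal]

local notation "φ" => gaussianPDFReal 0 1

lemma integrable_mul_gaussianPDFReal : Integrable (fun t => t * φ t) := by
  have := (integrable_mul_exp_neg_mul_sq (b := (1 / 2 : ℝ)) one_half_pos).const_mul (√(2 * π))⁻¹
  refine this.congr (ae_of_all _ fun t => ?_)
  simp only [gaussianPDFReal]; push_cast; ring_nf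

lemma integral_Ioi_mul_gaussianPDFReal (x : ℝ) : ∫ t in Ioi x, t * φ t = φ x := by
  have hderiv (t : ℝ) : HasDerivAt (fun t => -φ t) (t * φ t) t := by
    simpa using (hasDerivAt_gaussianPDFReal 0 1 t).fun_neg
  have hlim : Tendsto φ atTop (𝓝 0) :=
    tendsto_zero_of_hasDerivAt_of_integrableOn_Ioi (a := 0)
      (fun t _ => hasDerivAt_gaussianPDFReal 0 1 t)
      (by simpa [neg_div] using integrable_mul_gaussianPDFReal.neg.integrableOn)
      (integrable_gaussianPDFReal 0 1).integrableOn
  rw [integral_Ioi_of_hasDerivAt_of_tendsto' (fun t _ => hderiv t)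
    integrable_mul_gaussianPDFReal.integrableOn (by simpa using hlim.neg)]
  ring

lemma mul_integral_Ioi_gaussianPDFReal_le (x : ℝ) : x * ∫ t in Ioi x, φ t ≤ φ x := by
  rw [← integral_const_mul, ← integral_Ioi_mul_gaussianPDFReal x]
  refine setIntegral_mono_on ((integrable_gaussianPDFReal 0 1).const_mul x).integrableOn
    integrable_mul_gaussianPDFReal.integrableOn measurableSet_Ioi fun t ht => ?_
  exact mul_le_mul_of_nonneg_right (le_of_lt ht) (gaussianPDFReal_nonneg 0 1 t)

lemma neg_mul_integral_Iic_gaussianPDFReal_le (x : ℝ) : -x * ∫ t in Iic x, φ t ≤ φ x := by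
  have hsymm := integral_comp_neg_Ioi (-x) φ
  simp only [neg_neg, gaussianPDFReal_zero_neg] at hsymm
  rw [← hsymm, ← gaussianPDFReal_zero_neg 1 x]
  exact mul_integral_Ioi_gaussianPDFReal_le (-x)

lemma integral_sub_integral_gaussianReal_mul_gaussianPDFReal {h : ℝ → ℝ}
    (hh : Integrable h (gaussianReal 0 1)) :
    ∫ t, (h t - ∫ y, h y ∂gaussianReal 0 1) * φ t = 0 := by
  simp_rw [mul_comm _ (φ _), ← smul_eq_mul,
    ← integral_gaussianReal_eq_integral_smul (one_ne_zero (α := NNReal))]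
  rw [integral_sub hh (integrable_const _), integral_const, probReal_univ, one_smul, sub_self]

section Stein

variable {k : ℝ → ℝ} {M : ℝ}

-- As `φ' = -x φ`, the identity `(g φ)' = k φ` is the Stein equation `g' - x g = k`.
noncomputable def steinSolution (k : ℝ → ℝ) (x : ℝ) : ℝ := (∫ t in Iic x, k t * φ t) / φ x

lemma integrable_mul_gaussianPDFReal_of_abs_le (hk : AEStronglyMeasurable k)
    (hkM : ∀ x, |k x| ≤ M) : Integrable (fun t => k t * φ t) :=
  (integrable_gaussianPDFReal 0 1).bdd_mul hk (ae_of_all _ hkM)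

lemma abs_setIntegral_mul_gaussianPDFReal_le (hkM : ∀ x, |k x| ≤ M) (s : Set ℝ) :
    |∫ t in s, k t * φ t| ≤ M * ∫ t in s, φ t := by
  rw [← Real.norm_eq_abs, ← integral_const_mul]
  refine norm_integral_le_of_norm_le ((integrable_gaussianPDFReal 0 1).const_mul M).integrableOn
    (ae_of_all _ fun t => ?_)
  rw [norm_mul, Real.norm_of_nonneg (gaussianPDFReal_nonneg 0 1 t)]
  exact mul_le_mul_of_nonneg_right (hkM t) (gaussianPDFReal_nonneg 0 1 t)

lemma abs_mul_steinSolution_le (hk : AEStronglyMeasurable k) (hkM : ∀ x, |k x| ≤ M)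
    (hk₀ : ∫ t, k t * φ t = 0) (x : ℝ) : |x * steinSolution k x| ≤ M := by
  have hφ := gaussianPDFReal_pos 0 1 x one_ne_zero
  have hM : 0 ≤ M := (abs_nonneg _).trans (hkM 0)
  rw [steinSolution, mul_div_assoc', abs_div, abs_of_pos hφ, div_le_iff₀ hφ, abs_mul]
  rcases le_total 0 x with hx | hx
  · have hcompl : ∫ t in Iic x, k t * φ t = -∫ t in Ioi x, k t * φ t := by
      rw [eq_neg_iff_add_eq_zero, intervalIntegral.integral_Iic_add_Ioi, hk₀] <;>
        exact (integrable_mul_gaussianPDFReal_of_abs_le hk hkM).integrableOn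
    calc |x| * |∫ t in Iic x, k t * φ t| ≤ x * (M * ∫ t in Ioi x, φ t) := by
          rw [hcompl, abs_neg, abs_of_nonneg hx]
          exact mul_le_mul_of_nonneg_left (abs_setIntegral_mul_gaussianPDFReal_le hkM _) hx
      _ = M * (x * ∫ t in Ioi x, φ t) := by ring
      _ ≤ M * φ x := mul_le_mul_of_nonneg_left (mul_integral_Ioi_gaussianPDFReal_le x) hM
  · calc |x| * |∫ t in Iic x, k t * φ t| ≤ -x * (M * ∫ t in Iic x, φ t) := by
          rw [abs_of_nonpos hx]
          exact mul_le_mul_of_nonneg_left (abs_setIntegral_mul_gaussianPDFReal_le hkM _)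
            (neg_nonneg.2 hx)
      _ = M * (-x * ∫ t in Iic x, φ t) := by ring
      _ ≤ M * φ x := mul_le_mul_of_nonneg_left (neg_mul_integral_Iic_gaussianPDFReal_le x) hM

lemma hasDerivAt_steinSolution (hk : Continuous k) (hkM : ∀ x, |k x| ≤ M) (x : ℝ) :
    HasDerivAt (steinSolution k) (x * steinSolution k x + k x) x := by
  have hφ := (gaussianPDFReal_pos 0 1 x one_ne_zero).ne'
  have hΦ := hasDerivAt_integral_Iic (x := x)
    (integrable_mul_gaussianPDFReal_of_abs_le hk.aestronglyMeasurable hkM)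
    (hk.mul (continuous_gaussianPDFReal 0 1)).continuousAt
  refine (hΦ.div (hasDerivAt_gaussianPDFReal 0 1 x) hφ).congr_deriv ?_
  simp only [steinSolution, NNReal.coe_one]
  field_simp
  ring

lemma abs_deriv_steinSolution_le (hk : Continuous k) (hkM : ∀ x, |k x| ≤ M)
    (hk₀ : ∫ t, k t * φ t = 0) (x : ℝ) : |deriv (steinSolution k) x| ≤ 2 * M := by
  rw [(hasDerivAt_steinSolution hk hkM x).deriv]
  calc |x * steinSolution k x + k x| ≤ |x * steinSolution k x| + |k x| := abs_add_le _ _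
    _ ≤ M + M := add_le_add (abs_mul_steinSolution_le hk.aestronglyMeasurable hkM hk₀ x) (hkM x)
    _ = 2 * M := by ring

lemma contDiff_one_steinSolution (hk : Continuous k) (hkM : ∀ x, |k x| ≤ M) :
    ContDiff ℝ 1 (steinSolution k) := by
  have hdiff : Differentiable ℝ (steinSolution k) := fun x =>
    (hasDerivAt_steinSolution hk hkM x).differentiableAt
  rw [contDiff_one_iff_deriv]
  refine ⟨hdiff, ?_⟩
  rw [funext fun x => (hasDerivAt_steinSolution hk hkM x).deriv]
  exact (continuous_id.mul hdiff.continuous).add hk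

end Stein

theorem abs_integral_deriv_sub_mul_le {Ω : Type*} [MeasurableSpace Ω] {P : Measure Ω}
    [IsFiniteMeasure P] {F G : Ω → ℝ} (hF : Measurable F) (hG : Integrable G P)
    {g : ℝ → ℝ} {B M : ℝ} (hg : ContDiff ℝ 1 g) (hg' : ∀ x, |deriv g x| ≤ B)
    (hxg : ∀ x, |x * g x| ≤ M) (hFG : ∫ ω, F ω * g (F ω) ∂P = ∫ ω, deriv g (F ω) * G ω ∂P) :
    |∫ ω, (deriv g (F ω) - F ω * g (F ω)) ∂P| ≤ B * ∫ ω, |G ω - 1| ∂P := by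
  have hg'F : Integrable (fun ω => deriv g (F ω)) P :=
    Integrable.of_bound ((hg.continuous_deriv le_rfl).measurable.comp hF).aestronglyMeasurable
      B (ae_of_all _ fun ω => hg' (F ω))
  have hFgF : Integrable (fun ω => F ω * g (F ω)) P :=
    Integrable.of_bound (hF.mul (hg.continuous.measurable.comp hF)).aestronglyMeasurable
      M (ae_of_all _ fun ω => hxg (F ω))
  have hg'FG : Integrable (fun ω => deriv g (F ω) * G ω) P :=
    hG.bdd_mul hg'F.aestronglyMeasurable (ae_of_all _ fun ω => hg' (F ω))
  have hsplit : ∫ ω, (deriv g (F ω) - F ω * g (F ω)) ∂P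
      = ∫ ω, -(deriv g (F ω) * (G ω - 1)) ∂P := by
    rw [integral_sub hg'F hFgF, hFG, ← integral_sub hg'F hg'FG]
    congr 1 with ω
    ring
  rw [hsplit, ← Real.norm_eq_abs, ← integral_const_mul]
  refine norm_integral_le_of_norm_le ((hG.sub (integrable_const 1)).abs.const_mul _)
    (ae_of_all _ fun ω => ?_)
  rw [norm_neg, norm_mul, Real.norm_eq_abs, Real.norm_eq_abs]
  exact mul_le_mul_of_nonneg_right (hg' _) (abs_nonneg _)

theorem abs_integral_comp_sub_integral_gaussianReal_le {Ω : Type*} [MeasurableSpace Ω]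
    {P : Measure Ω} [IsProbabilityMeasure P] {F G : Ω → ℝ} (hF : Measurable F)
    (hG : Integrable G P)
    (hIBP : ∀ g : ℝ → ℝ, ContDiff ℝ 1 g → (∃ C : ℝ, ∀ x, |g x| ≤ C ∧ |deriv g x| ≤ C) →
      ∫ ω, F ω * g (F ω) ∂P = ∫ ω, deriv g (F ω) * G ω ∂P)
    {h : ℝ → ℝ} {M : ℝ} (hh : Continuous h)
    (hhM : ∀ x, |h x - ∫ y, h y ∂gaussianReal 0 1| ≤ M) :
    |∫ ω, h (F ω) ∂P - ∫ y, h y ∂gaussianReal 0 1| ≤ 2 * M * ∫ ω, |G ω - 1| ∂P := by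
  set m := ∫ y, h y ∂gaussianReal 0 1
  have hk : Continuous (fun x => h x - m) := hh.sub continuous_const
  have hbound (x : ℝ) : ‖h x‖ ≤ M + |m| := by
    rw [Real.norm_eq_abs]
    linarith [hhM x, sub_add_cancel (h x) m ▸ abs_add_le (h x - m) m]
  have hhF : Integrable (fun ω => h (F ω)) P :=
    Integrable.of_bound (hh.measurable.comp hF).aestronglyMeasurable _ (ae_of_all _ (hbound <| F ·))
  have hk₀ := integral_sub_integral_gaussianReal_mul_gaussianPDFReal
    (Integrable.of_bound hh.aestronglyMeasurable _ (ae_of_all _ hbound))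
  set g := steinSolution fun x => h x - m
  have hstein (x : ℝ) : h x - m = deriv g x - x * g x := by
    rw [(hasDerivAt_steinSolution hk hhM x).deriv]; ring
  have hg := contDiff_one_steinSolution hk hhM
  have hg' := abs_deriv_steinSolution_le hk hhM hk₀
  have hxg := abs_mul_steinSolution_le hk.aestronglyMeasurable hhM hk₀
  obtain ⟨C, hC⟩ := hg.continuous.exists_bound_of_abs_mul_le hxg
  have hFG := hIBP g hg
    ⟨max C (2 * M), fun x => ⟨(hC x).trans (le_max_left _ _), (hg' x).trans (le_max_right _ _)⟩⟩
  have hmean : ∫ ω, h (F ω) ∂P - m = ∫ ω, (deriv g (F ω) - F ω * g (F ω)) ∂P := calc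
    ∫ ω, h (F ω) ∂P - m = ∫ ω, (h (F ω) - m) ∂P := by
      rw [integral_sub hhF (integrable_const m), integral_const, probReal_univ, one_smul]
    _ = ∫ ω, (deriv g (F ω) - F ω * g (F ω)) ∂P :=
      integral_congr_ae (ae_of_all _ fun ω => hstein (F ω))
  rw [hmean]
  exact abs_integral_deriv_sub_mul_le hF hG hg hg' hxg hFG

theorem malliavin_stein_bound_general {Ω : Type*} [MeasureSpace Ω]
    [IsProbabilityMeasure (ℙ : Measure Ω)]
    (F G : Ω → ℝ) (hFmeas : Measurable F)
    (hG2 : MemLp G 2 ℙ)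
    (hGmean : ∫ ω, G ω ∂ℙ = 1)
    (hIBP : ∀ g : ℝ → ℝ, ContDiff ℝ 1 g → (∃ C : ℝ, ∀ x, |g x| ≤ C ∧ |deriv g x| ≤ C) →
      ∫ ω, F ω * g (F ω) ∂ℙ = ∫ ω, deriv g (F ω) * G ω ∂ℙ) :
    ∀ A : Set ℝ, MeasurableSet A →
      |(Measure.map F ℙ A).toReal - ((gaussianReal 0 1) A).toReal|
        ≤ 2 * Real.sqrt (variance G ℙ) := by
  intro A hA
  have := Measure.isProbabilityMeasure_map (μ := (ℙ : Measure Ω)) hFmeas.aemeasurable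
  have hvar : ∫ ω, |G ω - 1| ∂ℙ ≤ √(Var[G; ℙ]) :=
    hGmean ▸ integral_abs_sub_integral_le_sqrt_variance hG2
  refine abs_measureReal_sub_le_of_forall_continuous (fun f hf hf01 => ?_) hA
  rw [integral_map hFmeas.aemeasurable hf.aestronglyMeasurable]
  calc _ ≤ 2 * 1 * ∫ ω, |G ω - 1| ∂ℙ :=
        abs_integral_comp_sub_integral_gaussianReal_le hFmeas (hG2.integrable one_le_two) hIBP hf
          (abs_sub_integral_le_one hf01)
    _ ≤ 2 * √(Var[G; ℙ]) := by linarith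

/-- The Malliavin-Stein bound: if a centered square-integrable `F` satisfies the integration by
parts identity `E[F g(F)] = E[g'(F) G]` (which holds with `G = ⟨DF, u⟩` when `F = δ(u)`), and
`E[G] = 1`, then `d_TV(F, N(0,1)) ≤ 2 √Var(G)`. -/
theorem malliavin_stein_bound {Ω : Type*} [MeasureSpace Ω]
    [IsProbabilityMeasure (ℙ : Measure Ω)]
    (F G : Ω → ℝ) (hFmeas : Measurable F)
    (hF2 : MemLp F 2 ℙ) (hG2 : MemLp G 2 ℙ)
    (hFc : ∫ ω, F ω ∂ℙ = 0) (hGmean : ∫ ω, G ω ∂ℙ = 1)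
    (hIBP : ∀ g : ℝ → ℝ, ContDiff ℝ 1 g → (∃ C : ℝ, ∀ x, |g x| ≤ C ∧ |deriv g x| ≤ C) →
      ∫ ω, F ω * g (F ω) ∂ℙ = ∫ ω, deriv g (F ω) * G ω ∂ℙ) :
    ∀ A : Set ℝ, MeasurableSet A →
      |(Measure.map F ℙ A).toReal - ((gaussianReal 0 1) A).toReal|
        ≤ 2 * Real.sqrt (variance G ℙ) :=
  malliavin_stein_bound_general F G hFmeas hG2 hGmean hIBP
end
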